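/- Let p be an odd prime, t ≥ 1, r = p^t and k = (r−1)/2. Then in F_p[T] the quotient in the Euclidean division of T^r by (T²−1)^{(r−1)/2} equals T; consequently the sequence of polynomials defined by A_1 = T and A_{i+1} = ⌊A_i^r / (T²−1)^k⌋ (polynomial part) is constant, A_i = T for all i ≥ 1. -/

import Mathlib

/-!
Since `r = 2k + 1`, `T^r = T · (T²)^k`, and `T^k = (T - 1)^k + g` with `deg g < k`.
Substituting `T²` for `T` gives `T^r = T (T² - 1)^k + T g(T²)` with
`deg (T g(T²)) ≤ 2k - 1 < deg (T² - 1)^k`. So the quotient is `T`, and the recursion is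
stationary at `A_1 = T`.
-/

open Polynomial

noncomputable section

/-- `A_1 = T`, `A_{i+1} = ⌊A_i^r / P_k⌋` where `P_k = (T²-1)^k` (Euclidean quotient). -/
def Aseq (K : Type*) [Field K] (r k : ℕ) : ℕ → Polynomial K
  | 0 => X
  | 1 => X
  | i + 2 => Aseq K r k (i + 1) ^ r / (X ^ 2 - 1) ^ k

namespace Polynomial

lemma monic_X_sq_sub_one {R : Type*} [Ring R] : ((X : R[X]) ^ 2 - 1).Monic := by
  simpa using monic_X_pow_sub_C (1 : R) two_ne_zero

lemma natDegree_X_pow_sub_X_sub_one_pow_lt {R : Type*} [Ring R] [Nontrivial R] {k : ℕ}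
    (hk : k ≠ 0) :
    ((X : R[X]) ^ k - (X - 1) ^ k).natDegree < k := by
  have hmon : ((X : R[X]) - 1).Monic := by simpa using monic_X_sub_C (1 : R)
  have hdeg : ((X : R[X]) - 1).natDegree = 1 := by simpa using natDegree_X_sub_C (1 : R)
  by_cases h0 : (X : R[X]) ^ k - (X - 1) ^ k = 0
  · simpa [h0] using Nat.pos_of_ne_zero hk
  rw [natDegree_lt_iff_degree_lt h0, ← degree_X_pow (R := R) k]
  refine degree_sub_lt_left ?_ (monic_X_pow k).ne_zero ?_
  · rw [degree_X_pow, degree_eq_natDegree (hmon.pow k).ne_zero, hmon.natDegree_pow, hdeg, mul_one]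
  · rw [(monic_X_pow k).leadingCoeff, (hmon.pow k).leadingCoeff]

lemma X_pow_two_mul_add_one_divByMonic {R : Type*} [CommRing R] [Nontrivial R] (k : ℕ) :
    (X : R[X]) ^ (2 * k + 1) /ₘ (X ^ 2 - 1) ^ k = X := by
  set g : R[X] := X ^ k - (X - 1) ^ k
  have hsplit : X * g.comp (X ^ 2) + (X ^ 2 - 1) ^ k * X = (X : R[X]) ^ (2 * k + 1) := by
    simp only [g, sub_comp, pow_comp, X_comp, one_comp]
    ring
  refine (div_modByMonic_unique X _ (monic_X_sq_sub_one.pow k) ⟨hsplit, ?_⟩).1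
  rcases Nat.eq_zero_or_pos k with rfl | hk
  · simp [g]
  apply degree_lt_degree
  have hg : g.natDegree < k := natDegree_X_pow_sub_X_sub_one_pow_lt hk.ne'
  calc (X * g.comp (X ^ 2)).natDegree ≤ 1 + g.natDegree * 2 := by
        refine (natDegree_mul_le ..).trans (add_le_add natDegree_X_le ?_)
        exact natDegree_comp_le.trans (by rw [natDegree_X_pow])
    _ < ((X ^ 2 - 1) ^ k : R[X]).natDegree := by
        rw [monic_X_sq_sub_one.natDegree_pow, ← C_1, natDegree_X_pow_sub_C]
        omega

lemma X_pow_two_mul_add_one_div {K : Type*} [Field K] (k : ℕ) :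
    (X : K[X]) ^ (2 * k + 1) / (X ^ 2 - 1) ^ k = X := by
  rw [← divByMonic_eq_div _ (monic_X_sq_sub_one.pow k), X_pow_two_mul_add_one_divByMonic]

end Polynomial

lemma Aseq_succ_eq_X {K : Type*} [Field K] {r k : ℕ} (h : (X : K[X]) ^ r / (X ^ 2 - 1) ^ k = X)
    (i : ℕ) : Aseq K r k (i + 1) = X := by
  induction i with
  | zero => rfl
  | succ i ih => rw [Aseq, ih, h]

theorem statement6_general (p t : ℕ) [Fact p.Prime] (hodd : p ≠ 2) :
    (X : Polynomial (ZMod p)) ^ (p ^ t) / (X ^ 2 - 1) ^ ((p ^ t - 1) / 2) = X ∧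
    ∀ i, 1 ≤ i → Aseq (ZMod p) (p ^ t) ((p ^ t - 1) / 2) i = X := by
  have hr : 2 * ((p ^ t - 1) / 2) + 1 = p ^ t := by
    obtain ⟨m, hm⟩ := ((Fact.out : p.Prime).odd_of_ne_two hodd).pow (n := t)
    omega
  have hdiv : (X : (ZMod p)[X]) ^ (p ^ t) / (X ^ 2 - 1) ^ ((p ^ t - 1) / 2) = X := by
    simpa only [hr] using X_pow_two_mul_add_one_div (K := ZMod p) ((p ^ t - 1) / 2)
  refine ⟨hdiv, fun i hi => ?_⟩
  obtain ⟨j, rfl⟩ := Nat.exists_eq_add_of_le' hi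
  exact Aseq_succ_eq_X hdiv j

/-- Let `p` be an odd prime, `r = p^t`, `k = (r-1)/2`. The Euclidean quotient of `T^r` by
`(T²-1)^((r-1)/2)` in `F_p[T]` is `T`; consequently the sequence `A_1 = T`,
`A_{i+1} = ⌊A_i^r/(T²-1)^k⌋` is constant equal to `T`. -/
theorem statement6 (p t : ℕ) [Fact p.Prime] (hodd : p ≠ 2) (ht : 1 ≤ t) :
    (X : Polynomial (ZMod p)) ^ (p ^ t) / (X ^ 2 - 1) ^ ((p ^ t - 1) / 2) = X ∧
    ∀ i, 1 ≤ i → Aseq (ZMod p) (p ^ t) ((p ^ t - 1) / 2) i = X :=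
  statement6_general p t hodd
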